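/- Let J ⊆ P = K[x_0,…,x_n] be a homogeneous ideal with P/J of positive Krull dimension, let ⪯ be a term ordering on 𝕋, and let 𝒪_{⪯,J} = 𝕋 ∖ in_⪯(J). Then 𝒪_{⪯,J} is an order ideal and there exists a unique homogeneous border basis of J on the order ideal 𝒪_{⪯,J}. -/

import Mathlib

open MvPolynomial

namespace Border

/-- A term of `K[x_0, …, x_n]`, identified with its exponent vector. -/
abbrev Term (n : ℕ) := Fin (n + 1) →₀ ℕ

variable {n : ℕ}

/-- The (standard) degree of a term. -/
def tdeg (m : Term n) : ℕ := ∑ i, m i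

/-- An order ideal: a nonempty set of terms closed under divisors. -/
def IsOrderIdeal (O : Set (Term n)) : Prop :=
  O.Nonempty ∧ ∀ τ ∈ O, ∀ τ' : Term n, τ' ≤ τ → τ' ∈ O

/-- The border `∂𝒪 = (x_0·𝒪 ∪ ⋯ ∪ x_n·𝒪) ∖ 𝒪`. -/
def border (O : Set (Term n)) : Set (Term n) :=
  {σ | σ ∉ O ∧ ∃ r : Fin (n + 1), ∃ τ ∈ O, σ = τ + Finsupp.single r 1}

/-- Multiplicative set of a border term `σ`, with respect to a labeling `lab` of the border:
`𝒯_σ = {η : σ' ∤ η·σ for every border term σ' with a larger label}`. -/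
def mulSet (O : Set (Term n)) (lab : Term n → ℕ) (σ : Term n) : Set (Term n) :=
  {η | ∀ σ' ∈ border O, lab σ < lab σ' → ¬ σ' ≤ η + σ}

/-- The cone `C(σ) = {η·σ : η ∈ 𝒯_σ}`. -/
def cone (O : Set (Term n)) (lab : Term n → ℕ) (σ : Term n) : Set (Term n) :=
  (fun η => η + σ) '' mulSet O lab σ

/-- A labeling of the border which is injective and ordered increasingly by degree. -/
def DegOrderedLabeling (O : Set (Term n)) (lab : Term n → ℕ) : Prop :=
  Set.InjOn lab (border O) ∧
    ∀ σ ∈ border O, ∀ σ' ∈ border O, lab σ < lab σ' → tdeg σ ≤ tdeg σ'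

/-- Iterated border closures: `∂⁰𝒪 := 𝒪`, and the `(k+1)`-st closure adds the border. -/
def borderClosure (O : Set (Term n)) : ℕ → Set (Term n)
  | 0 => O
  | k + 1 => borderClosure O k ∪ border (borderClosure O k)

/-- The index `ind_𝒪(τ)`: the least `k` with `τ ∈ ∂^k𝒪`. -/
noncomputable def ind (O : Set (Term n)) (τ : Term n) : ℕ :=
  sInf {k | τ ∈ borderClosure O k}

/-- Degree-`d` part of a set of terms. -/
def Od (O : Set (Term n)) (d : ℕ) : Set (Term n) := {τ | τ ∈ O ∧ tdeg τ = d}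

variable {K : Type*} [Field K]

/-- The index of a nonzero polynomial: the maximal index of a term of its support. -/
noncomputable def indP (O : Set (Term n)) (f : MvPolynomial (Fin (n + 1)) K) : ℕ :=
  f.support.sup (ind O)

/-- A homogeneous `∂𝒪`-prebasis: a family `g σ = σ - Σ_{τ ∈ 𝒪_{deg σ}} c_{στ} τ`. -/
def IsPrebasis (O : Set (Term n)) (g : Term n → MvPolynomial (Fin (n + 1)) K) : Prop :=
  ∀ σ ∈ border O, ∀ τ ∈ (monomial σ (1 : K) - g σ).support, τ ∈ O ∧ tdeg τ = tdeg σ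

/-- The set of border reductors `𝒯G = {η·g_σ : σ ∈ ∂𝒪, η ∈ 𝒯_σ}`. -/
def reductors (O : Set (Term n)) (lab : Term n → ℕ)
    (g : Term n → MvPolynomial (Fin (n + 1)) K) : Set (MvPolynomial (Fin (n + 1)) K) :=
  {p | ∃ σ ∈ border O, ∃ η ∈ mulSet O lab σ, p = monomial η (1 : K) * g σ}

/-- The degree-`d` border reductors `𝒯G_d = 𝒯G ∩ P_d`. -/
def reductorsDeg (O : Set (Term n)) (lab : Term n → ℕ)
    (g : Term n → MvPolynomial (Fin (n + 1)) K) (d : ℕ) :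
    Set (MvPolynomial (Fin (n + 1)) K) :=
  reductors O lab g ∩ {p | p.IsHomogeneous d}

/-- One step of the border reduction relation `→_G`. -/
def Step (O : Set (Term n)) (lab : Term n → ℕ)
    (g : Term n → MvPolynomial (Fin (n + 1)) K)
    (f h : MvPolynomial (Fin (n + 1)) K) : Prop :=
  ∃ σ ∈ border O, ∃ η ∈ mulSet O lab σ, η + σ ∈ f.support ∧
    h = f - f.coeff (η + σ) • (monomial η (1 : K) * g σ)

/-- The border reduction relation `→⁺_G` (finitely many, possibly zero, steps). -/
def Reduces (O : Set (Term n)) (lab : Term n → ℕ)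
    (g : Term n → MvPolynomial (Fin (n + 1)) K) :
    MvPolynomial (Fin (n + 1)) K → MvPolynomial (Fin (n + 1)) K → Prop :=
  Relation.ReflTransGen (Step O lab g)

/-- The `K`-vector space spanned by a set of terms. -/
noncomputable def spanTerms (K : Type*) [Field K] (S : Set (Term n)) :
    Submodule K (MvPolynomial (Fin (n + 1)) K) :=
  Submodule.span K ((fun τ => monomial τ (1 : K)) '' S)

/-- The ideal `(G)` generated by a `∂𝒪`-prebasis. -/
noncomputable def idealG (O : Set (Term n)) (g : Term n → MvPolynomial (Fin (n + 1)) K) :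
    Ideal (MvPolynomial (Fin (n + 1)) K) :=
  Ideal.span (g '' border O)

/-- The degree-`d` part `I_d` of an ideal, as a `K`-vector subspace. -/
noncomputable def degPart (I : Ideal (MvPolynomial (Fin (n + 1)) K)) (d : ℕ) :
    Submodule K (MvPolynomial (Fin (n + 1)) K) :=
  Submodule.restrictScalars K I ⊓ homogeneousSubmodule (Fin (n + 1)) K d

/-- Homogeneous ideal. -/
def IsHomogeneousIdeal (I : Ideal (MvPolynomial (Fin (n + 1)) K)) : Prop :=
  ∀ f ∈ I, ∀ d : ℕ, homogeneousComponent d f ∈ I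

/-- `G` is a homogeneous `∂𝒪`-basis of `J`: it is a prebasis contained in `J` and for every
`d` one has `P_d = J_d ⊕ ⟨𝒪_d⟩`, i.e. the residue classes of `𝒪_d` are a basis of `P_d/J_d`. -/
def IsBorderBasisOf (O : Set (Term n)) (g : Term n → MvPolynomial (Fin (n + 1)) K)
    (J : Ideal (MvPolynomial (Fin (n + 1)) K)) : Prop :=
  IsPrebasis O g ∧ (∀ σ ∈ border O, g σ ∈ J) ∧
    ∀ d : ℕ, degPart J d ⊔ spanTerms K (Od O d) = homogeneousSubmodule (Fin (n + 1)) K d ∧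
      Disjoint (degPart J d) (spanTerms K (Od O d))

/-- An `m`-lower representation of `f` by `𝒯G`: `f = Σ c_j • η_j·g_{σ_j}` with distinct
pairs `(η_j, σ_j)`, `η_j ∈ 𝒯_{σ_j}` and `ind(η_j σ_j) ≤ m`. -/
def HasLRep (O : Set (Term n)) (lab : Term n → ℕ)
    (g : Term n → MvPolynomial (Fin (n + 1)) K)
    (f : MvPolynomial (Fin (n + 1)) K) (m : ℕ) : Prop :=
  ∃ (s : Finset (Term n × Term n)) (c : Term n × Term n → K),
    (∀ p ∈ s, p.2 ∈ border O ∧ p.1 ∈ mulSet O lab p.2 ∧ ind O (p.1 + p.2) ≤ m) ∧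
    f = ∑ p ∈ s, c p • (monomial p.1 (1 : K) * g p.2)

/-- An `m`-lower representation of `f` by `𝒯G_d`. -/
def HasLRepDeg (O : Set (Term n)) (lab : Term n → ℕ)
    (g : Term n → MvPolynomial (Fin (n + 1)) K)
    (f : MvPolynomial (Fin (n + 1)) K) (m d : ℕ) : Prop :=
  ∃ (s : Finset (Term n × Term n)) (c : Term n × Term n → K),
    (∀ p ∈ s, p.2 ∈ border O ∧ p.1 ∈ mulSet O lab p.2 ∧ ind O (p.1 + p.2) ≤ m ∧
      (monomial p.1 (1 : K) * g p.2).IsHomogeneous d) ∧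
    f = ∑ p ∈ s, c p • (monomial p.1 (1 : K) * g p.2)

/-- The subtype of terms of `𝒪` of degree `d`. -/
abbrev OdSub (O : Set (Term n)) (d : ℕ) : Type _ := {τ : Term n // τ ∈ Od O d}

lemma tdeg_component_lt {d : ℕ} (m : Term n) (h : tdeg m = d) (i : Fin (n + 1)) :
    m i < d + 1 := by
  have : m i ≤ tdeg m :=
    Finset.single_le_sum (f := fun j => m j) (fun j _ => Nat.zero_le _) (Finset.mem_univ i)
  omega

instance (O : Set (Term n)) (d : ℕ) : Finite (OdSub O d) := by
  have hinj : Function.Injective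
      (fun τ : OdSub O d => fun i : Fin (n + 1) =>
        (⟨τ.1 i, tdeg_component_lt τ.1 τ.2.2 i⟩ : Fin (d + 1))) := by
    intro a b hab
    apply Subtype.ext
    apply Finsupp.ext
    intro i
    simpa using congrArg Fin.val (congrFun hab i)
  exact Finite.of_injective _ hinj

noncomputable instance (O : Set (Term n)) (d : ℕ) : Fintype (OdSub O d) :=
  Fintype.ofFinite _

open scoped Classical in
/-- The `r`-th `d`-graded formal multiplication matrix of a prebasis `G`,
with rows indexed by `𝒪_{d+1}` and columns by `𝒪_d`. -/
noncomputable def multMatrix (O : Set (Term n))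
    (g : Term n → MvPolynomial (Fin (n + 1)) K) (r : Fin (n + 1)) (d : ℕ) :
    Matrix (OdSub O (d + 1)) (OdSub O d) K :=
  Matrix.of fun τ' τ =>
    if τ.1 + Finsupp.single r 1 ∈ O then
      (if τ.1 + Finsupp.single r 1 = τ'.1 then 1 else 0)
    else (monomial (τ.1 + Finsupp.single r 1) (1 : K)
            - g (τ.1 + Finsupp.single r 1)).coeff τ'.1

/-- The minimum degree of a border term. -/
noncomputable def minDegBorder (O : Set (Term n)) : ℕ := sInf (tdeg '' border O)

/-- The `d`-th Macaulay transformation `a^{⟨d⟩}`, computed greedily. -/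
noncomputable def macaulay : ℕ → ℕ → ℕ
  | 0, _ => 0
  | d + 1, a =>
    if a = 0 then 0
    else
      Nat.choose (sSup {k | Nat.choose k (d + 1) ≤ a} + 1) (d + 2) +
        macaulay d (a - Nat.choose (sSup {k | Nat.choose k (d + 1) ≤ a}) (d + 1))

/-- An ideal is generated in degrees `≤ m` if it is generated by its homogeneous
elements of degree `≤ m`. -/
def GeneratedInDegLE (I : Ideal (MvPolynomial (Fin (n + 1)) K)) (m : ℕ) : Prop :=
  I = Ideal.span {f | f ∈ I ∧ ∃ d ≤ m, f.IsHomogeneous d}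

/-- The set of leading terms of nonzero elements of `J` with respect to a term ordering. -/
def leadTerms (ole : Term n → Term n → Prop)
    (J : Ideal (MvPolynomial (Fin (n + 1)) K)) : Set (Term n) :=
  {τ | ∃ f ∈ J, f ≠ 0 ∧ τ ∈ f.support ∧ ∀ τ' ∈ f.support, ole τ' τ}

/-- The complement `𝕋 ∖ in_⪯(J)` of the initial ideal: the terms divisible by no
leading term of `J`. -/
def complementInitial (ole : Term n → Term n → Prop)
    (J : Ideal (MvPolynomial (Fin (n + 1)) K)) : Set (Term n) :=
  {τ | ∀ τ' ∈ leadTerms ole J, ¬ τ' ≤ τ}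

/-! In each degree `d`, `J_d` and the terms of `𝒪_d` span `P_d`: a linear form vanishing on both
would be nonzero on some `⪯`-least term `τ` of degree `d`, and `τ ∉ 𝒪` is the leading term of a
homogeneous `h ∈ J_d`, on which the form is then nonzero. The sum is direct because the leading
term of a nonzero element of `J` lies in `in_⪯(J)`. So `P_d = J_d ⊕ ⟨𝒪_d⟩`, and `g_σ` is forced
to be the `J_d`-component of the border term `σ`. -/

lemma exists_forall_rel_of_total {α : Type*} {r : α → α → Prop}
    (htotal : ∀ a b, r a b ∨ r b a) (htrans : ∀ a b c, r a b → r b c → r a c)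
    {s : Finset α} (hs : s.Nonempty) : ∃ a ∈ s, ∀ b ∈ s, r b a := by
  have : IsTrans α r := ⟨htrans⟩
  have : Nonempty s := hs.to_subtype
  have hdir : Directed r (Subtype.val : s → α) := fun a b =>
    (htotal a b).elim (fun h => ⟨b, h, (htotal b b).elim id id⟩)
      (fun h => ⟨a, (htotal a a).elim id id, h⟩)
  obtain ⟨a, ha⟩ := hdir.finset_le Finset.univ
  exact ⟨a, a.2, fun b hb => ha ⟨b, hb⟩ (Finset.mem_univ _)⟩

lemma linearMap_apply_eq_sum {σ R M : Type*} [CommSemiring R] [AddCommMonoid M] [Module R M]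
    (φ : MvPolynomial σ R →ₗ[R] M) (p : MvPolynomial σ R) :
    φ p = ∑ s ∈ p.support, p.coeff s • φ (monomial s 1) := by
  conv_lhs => rw [p.as_sum]
  simp only [map_sum, ← map_smul, smul_eq_mul, mul_one]

lemma tdeg_eq_degree (m : Term n) : tdeg m = m.degree := (Finsupp.degree_eq_sum m).symm

lemma isHomogeneous_iff_tdeg {p : MvPolynomial (Fin (n + 1)) K} {d : ℕ} :
    p.IsHomogeneous d ↔ ∀ τ ∈ p.support, tdeg τ = d := by
  rw [← mem_homogeneousSubmodule, homogeneousSubmodule_eq_finsupp_supported,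
    AddMonoidAlgebra.mem_supported]
  simp only [Set.subset_def, tdeg_eq_degree]
  rfl

lemma mem_spanTerms {S : Set (Term n)} {p : MvPolynomial (Fin (n + 1)) K} :
    p ∈ spanTerms K S ↔ ↑p.support ⊆ S := by
  rw [spanTerms, ← restrictSupport_eq_span, mem_restrictSupport_iff]

lemma spanTerms_Od_le (O : Set (Term n)) (d : ℕ) :
    spanTerms K (Od O d) ≤ homogeneousSubmodule (Fin (n + 1)) K d := fun _ hp =>
  isHomogeneous_iff_tdeg.2 fun _ hτ => (mem_spanTerms.1 hp hτ).2

lemma isPrebasis_iff {O : Set (Term n)} {g : Term n → MvPolynomial (Fin (n + 1)) K} :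
    IsPrebasis O g ↔ ∀ σ ∈ border O, monomial σ 1 - g σ ∈ spanTerms K (Od O (tdeg σ)) := by
  simp only [mem_spanTerms, Set.subset_def]
  rfl

section DirectSum

variable {O : Set (Term n)} {J : Ideal (MvPolynomial (Fin (n + 1)) K)}

lemma eq_of_isPrebasis (hdisj : ∀ d, Disjoint (degPart J d) (spanTerms K (Od O d)))
    {g g' : Term n → MvPolynomial (Fin (n + 1)) K} (hg : IsPrebasis O g) (hg' : IsPrebasis O g')
    (hgJ : ∀ σ ∈ border O, g σ ∈ J) (hg'J : ∀ σ ∈ border O, g' σ ∈ J)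
    {σ : Term n} (hσ : σ ∈ border O) : g' σ = g σ := by
  have hspan : g' σ - g σ ∈ spanTerms K (Od O (tdeg σ)) := by
    rw [← sub_sub_sub_cancel_left _ _ (monomial σ 1)]
    exact sub_mem (isPrebasis_iff.1 hg σ hσ) (isPrebasis_iff.1 hg' σ hσ)
  have hJ : g' σ - g σ ∈ degPart J (tdeg σ) :=
    ⟨J.sub_mem (hg'J σ hσ) (hgJ σ hσ), spanTerms_Od_le O _ hspan⟩
  exact sub_eq_zero.1 (Submodule.disjoint_def.1 (hdisj _) _ hJ hspan)

lemma exists_unique_borderBasis_of_directSum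
    (hsup : ∀ d, degPart J d ⊔ spanTerms K (Od O d) = homogeneousSubmodule (Fin (n + 1)) K d)
    (hdisj : ∀ d, Disjoint (degPart J d) (spanTerms K (Od O d))) :
    ∃ g : Term n → MvPolynomial (Fin (n + 1)) K, IsBorderBasisOf O g J ∧
      ∀ g', IsBorderBasisOf O g' J → ∀ σ ∈ border O, g' σ = g σ := by
  have hdecomp : ∀ σ : Term n, ∃ a ∈ J, monomial σ 1 - a ∈ spanTerms K (Od O (tdeg σ)) := by
    intro σ
    have hσ : monomial σ (1 : K) ∈ homogeneousSubmodule (Fin (n + 1)) K (tdeg σ) :=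
      isHomogeneous_iff_tdeg.2 fun τ hτ => by
        rw [Finset.mem_singleton.1 (support_monomial_subset hτ)]
    rw [← hsup, Submodule.mem_sup] at hσ
    obtain ⟨a, ha, b, hb, hab⟩ := hσ
    exact ⟨a, ha.1, by rwa [← hab, add_sub_cancel_left]⟩
  choose g hgJ hg using hdecomp
  have hgpre : IsPrebasis O g := isPrebasis_iff.2 fun σ _ => hg σ
  exact ⟨g, ⟨hgpre, fun σ _ => hgJ σ, fun d => ⟨hsup d, hdisj d⟩⟩,
    fun g' hg' σ hσ => eq_of_isPrebasis hdisj hgpre hg'.1 (fun σ _ => hgJ σ) hg'.2.1 hσ⟩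

end DirectSum

section TermOrder

variable {ole : Term n → Term n → Prop} {J : Ideal (MvPolynomial (Fin (n + 1)) K)}

lemma add_mem_leadTerms (hadd : ∀ a b c : Term n, ole a b → ole (a + c) (b + c))
    {τ : Term n} (hτ : τ ∈ leadTerms ole J) (η : Term n) : η + τ ∈ leadTerms ole J := by
  obtain ⟨f, hfJ, -, hτf, hmax⟩ := hτ
  have hcoeff : (monomial η 1 * f).coeff (η + τ) ≠ 0 := by
    rw [coeff_monomial_mul, one_mul]
    exact mem_support_iff.1 hτf
  refine ⟨monomial η 1 * f, J.mul_mem_left _ hfJ, fun h => hcoeff (by rw [h, coeff_zero]),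
    mem_support_iff.2 hcoeff, fun s hs => ?_⟩
  rw [mem_support_iff, coeff_monomial_mul'] at hs
  split_ifs at hs with hηs
  · have := hadd _ _ η (hmax _ (mem_support_iff.2 (by simpa using hs)))
    rwa [tsub_add_cancel_of_le hηs, add_comm τ] at this
  · exact absurd rfl hs

lemma mem_leadTerms_of_notMem_complementInitial
    (hadd : ∀ a b c : Term n, ole a b → ole (a + c) (b + c))
    {τ : Term n} (hτ : τ ∉ complementInitial ole J) : τ ∈ leadTerms ole J := by
  simp only [complementInitial, Set.mem_ofPred_eq, not_forall, not_not] at hτ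
  obtain ⟨τ', hτ', hle⟩ := hτ
  simpa [tsub_add_cancel_of_le hle] using add_mem_leadTerms hadd hτ' (τ - τ')

lemma exists_isHomogeneous_of_mem_leadTerms (hJ : IsHomogeneousIdeal J) {τ : Term n}
    (hτ : τ ∈ leadTerms ole J) :
    ∃ h ∈ J, h.IsHomogeneous (tdeg τ) ∧ τ ∈ h.support ∧ ∀ s ∈ h.support, ole s τ := by
  obtain ⟨f, hfJ, -, hτf, hmax⟩ := hτ
  refine ⟨homogeneousComponent (tdeg τ) f, hJ f hfJ _, homogeneousComponent_isHomogeneous _ _,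
    ?_, fun s hs => hmax s ?_⟩
  · simp [support_homogeneousComponent, hτf, tdeg_eq_degree]
  · simp only [support_homogeneousComponent, Finset.mem_filter] at hs
    exact hs.1

lemma isOrderIdeal_complementInitial (hJ : IsHomogeneousIdeal J) (hJtop : J ≠ ⊤) :
    IsOrderIdeal (complementInitial ole J) := by
  refine ⟨⟨0, fun τ hτ hle => ?_⟩, fun τ hτ τ' hle σ hσ hστ => hτ σ hσ (hστ.trans hle)⟩
  obtain rfl := nonpos_iff_eq_zero.1 hle
  obtain ⟨h, hhJ, hhom, h0, -⟩ := exists_isHomogeneous_of_mem_leadTerms hJ hτ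
  have hC : h = C (h.coeff 0) := by
    rw [← homogeneousComponent_zero, homogeneousComponent_eq_self]
    simpa [tdeg] using hhom
  refine hJtop (J.eq_top_of_isUnit_mem hhJ ?_)
  rw [hC]
  exact (isUnit_iff_ne_zero.2 (mem_support_iff.1 h0)).map C

lemma disjoint_spanTerms_complementInitial (htotal : ∀ a b : Term n, ole a b ∨ ole b a)
    (htrans : ∀ a b c : Term n, ole a b → ole b c → ole a c) :
    Disjoint (J.restrictScalars K) (spanTerms K (complementInitial ole J)) := by
  refine Submodule.disjoint_def.2 fun f hfJ hfO => ?_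
  by_contra hf
  obtain ⟨τ, hτf, hmax⟩ := exists_forall_rel_of_total htotal htrans (support_nonempty.2 hf)
  exact mem_spanTerms.1 hfO hτf τ ⟨f, hfJ, hf, hτf, hmax⟩ le_rfl

lemma map_monomial_eq_zero_of_vanishing (hJ : IsHomogeneousIdeal J)
    (htotal : ∀ a b : Term n, ole a b ∨ ole b a)
    (hantisymm : ∀ a b : Term n, ole a b → ole b a → a = b)
    (htrans : ∀ a b c : Term n, ole a b → ole b c → ole a c)
    (hadd : ∀ a b c : Term n, ole a b → ole (a + c) (b + c)) {d : ℕ}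
    (φ : MvPolynomial (Fin (n + 1)) K →ₗ[K] K) (hφJ : ∀ h ∈ degPart J d, φ h = 0)
    (hφO : ∀ τ ∈ Od (complementInitial ole J) d, φ (monomial τ 1) = 0)
    {τ₀ : Term n} (hτ₀ : tdeg τ₀ = d) : φ (monomial τ₀ 1) = 0 := by
  classical
  by_contra hφτ₀
  set T := (Finset.univ.finsuppAntidiag d).filter fun s : Term n => φ (monomial s 1) ≠ 0
  have hT {s : Term n} : s ∈ T ↔ tdeg s = d ∧ φ (monomial s 1) ≠ 0 := by simp [T, tdeg]
  obtain ⟨τ, hτT, hτmin⟩ := exists_forall_rel_of_total (r := flip ole) (fun a b => htotal b a)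
    (fun a b c hab hbc => htrans c b a hbc hab) ⟨τ₀, hT.2 ⟨hτ₀, hφτ₀⟩⟩
  obtain ⟨hτd, hφτ⟩ := hT.1 hτT
  have hτO : τ ∉ complementInitial ole J := fun hτO => hφτ (hφO τ ⟨hτO, hτd⟩)
  obtain ⟨h, hhJ, hhom, hτh, hh⟩ := exists_isHomogeneous_of_mem_leadTerms hJ
    (mem_leadTerms_of_notMem_complementInitial hadd hτO)
  have hφh : φ h = h.coeff τ • φ (monomial τ 1) := by
    rw [linearMap_apply_eq_sum, Finset.sum_eq_single_of_mem τ hτh]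
    intro s hs hsτ
    have hφs : φ (monomial s 1) = 0 := by
      by_contra hφs
      have hsT : s ∈ T := hT.2 ⟨hτd ▸ isHomogeneous_iff_tdeg.1 hhom s hs, hφs⟩
      exact hsτ (hantisymm _ _ (hh s hs) (hτmin s hsT))
    rw [hφs, smul_zero]
  have hφh0 := hφJ h ⟨hhJ, hτd ▸ hhom⟩
  rw [hφh] at hφh0
  exact smul_ne_zero (mem_support_iff.1 hτh) hφτ hφh0

lemma sup_degPart_spanTerms_complementInitial (hJ : IsHomogeneousIdeal J)
    (htotal : ∀ a b : Term n, ole a b ∨ ole b a)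
    (hantisymm : ∀ a b : Term n, ole a b → ole b a → a = b)
    (htrans : ∀ a b c : Term n, ole a b → ole b c → ole a c)
    (hadd : ∀ a b c : Term n, ole a b → ole (a + c) (b + c)) (d : ℕ) :
    degPart J d ⊔ spanTerms K (Od (complementInitial ole J) d) =
      homogeneousSubmodule (Fin (n + 1)) K d := by
  refine le_antisymm (sup_le inf_le_right (spanTerms_Od_le _ d)) fun f hf => ?_
  by_contra hfM
  obtain ⟨φ, hφf, hφM⟩ := Submodule.exists_dual_map_eq_bot_of_notMem hfM inferInstance
  have hφ := LinearMap.le_ker_iff_map.2 hφM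
  refine hφf ((linearMap_apply_eq_sum φ f).trans (Finset.sum_eq_zero fun s hs => ?_))
  rw [map_monomial_eq_zero_of_vanishing hJ htotal hantisymm htrans hadd φ
    (fun h hh => hφ (Submodule.mem_sup_left hh))
    (fun τ hτ => hφ (Submodule.mem_sup_right (Submodule.subset_span ⟨τ, hτ, rfl⟩)))
    (isHomogeneous_iff_tdeg.1 hf s hs), smul_zero]

end TermOrder

theorem borderBasis_of_termOrder_general
    (J : Ideal (MvPolynomial (Fin (n + 1)) K)) (hJ : IsHomogeneousIdeal J)
    (hdim : 0 < ringKrullDim (MvPolynomial (Fin (n + 1)) K ⧸ J))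
    (ole : Term n → Term n → Prop)
    (htotal : ∀ a b : Term n, ole a b ∨ ole b a)
    (hantisymm : ∀ a b : Term n, ole a b → ole b a → a = b)
    (htrans : ∀ a b c : Term n, ole a b → ole b c → ole a c)
    (hadd : ∀ a b c : Term n, ole a b → ole (a + c) (b + c)) :
    IsOrderIdeal (complementInitial ole J) ∧
    ∃ g : Term n → MvPolynomial (Fin (n + 1)) K,
      IsBorderBasisOf (complementInitial ole J) g J ∧
      ∀ g' : Term n → MvPolynomial (Fin (n + 1)) K,
        IsBorderBasisOf (complementInitial ole J) g' J →
          ∀ σ ∈ border (complementInitial ole J), g' σ = g σ := by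
  have hJtop : J ≠ ⊤ := fun h => by
    have := Ideal.Quotient.subsingleton_iff.2 h
    rw [ringKrullDim_eq_bot_of_subsingleton] at hdim
    exact not_lt_bot hdim
  refine ⟨isOrderIdeal_complementInitial hJ hJtop, exists_unique_borderBasis_of_directSum
    (sup_degPart_spanTerms_complementInitial hJ htotal hantisymm htrans hadd) fun d => ?_⟩
  exact (disjoint_spanTerms_complementInitial htotal htrans).mono inf_le_left
    (Submodule.span_mono (Set.image_mono fun _ hτ => hτ.1))

/-- **Border bases from Gröbner bases.** Let `J` be a homogeneous ideal with `P/J` of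
positive Krull dimension and `⪯` a term ordering. Then `𝒪_{⪯,J} = 𝕋 ∖ in_⪯(J)` is an
order ideal and `J` has a unique homogeneous border basis on it. -/
theorem borderBasis_of_termOrder
    (J : Ideal (MvPolynomial (Fin (n + 1)) K)) (hJ : IsHomogeneousIdeal J)
    (hdim : 0 < ringKrullDim (MvPolynomial (Fin (n + 1)) K ⧸ J))
    (ole : Term n → Term n → Prop)
    (htotal : ∀ a b : Term n, ole a b ∨ ole b a)
    (hantisymm : ∀ a b : Term n, ole a b → ole b a → a = b)
    (htrans : ∀ a b c : Term n, ole a b → ole b c → ole a c)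
    (hadd : ∀ a b c : Term n, ole a b → ole (a + c) (b + c))
    (hmin : ∀ a : Term n, ole 0 a) :
    IsOrderIdeal (complementInitial ole J) ∧
    ∃ g : Term n → MvPolynomial (Fin (n + 1)) K,
      IsBorderBasisOf (complementInitial ole J) g J ∧
      ∀ g' : Term n → MvPolynomial (Fin (n + 1)) K,
        IsBorderBasisOf (complementInitial ole J) g' J →
          ∀ σ ∈ border (complementInitial ole J), g' σ = g σ :=
  borderBasis_of_termOrder_general J hJ hdim ole htotal hantisymm htrans hadd

end Border
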